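/- arXiv:2507.05382 — 6 statements merged into one kernel-verified Lean document; each statement's English description precedes it below -/
import Mathlib

section
/- Let T : H →ᵐ H be maximal monotone on a real Hilbert space. If (y_k, v_k, ε_k) is a sequence with v_k ∈ T^[ε_k](y_k), y_k ⇀ y weakly, v_k → v strongly, and ε_k → ε, then v ∈ T^[ε](y). -/
open Filter InnerProductSpace

/-- The ε-enlargement of a set-valued map `T` on a real Hilbert space:
`u ∈ enl T ε x` iff `⟪x - y, u - v⟫ ≥ -ε` for all `(y, v)` in the graph of `T`. -/
def enl {H : Type*} [NormedAddCommGroup H] [InnerProductSpace ℝ H]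
    (T : H → Set H) (ε : ℝ) (x : H) : Set H :=
  {u | ∀ y v, v ∈ T y → -ε ≤ ⟪x - y, u - v⟫_ℝ}

/-- A set-valued map is monotone. -/
def MonotoneOp {H : Type*} [NormedAddCommGroup H] [InnerProductSpace ℝ H]
    (T : H → Set H) : Prop :=
  ∀ x y u v, u ∈ T x → v ∈ T y → 0 ≤ ⟪x - y, u - v⟫_ℝ

/-- A set-valued map is maximal monotone: it is monotone and its graph is not properly
contained in the graph of any monotone operator. -/
def MaxMonotoneOp {H : Type*} [NormedAddCommGroup H] [InnerProductSpace ℝ H]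
    (T : H → Set H) : Prop :=
  MonotoneOp T ∧ ∀ S : H → Set H, MonotoneOp S → (∀ x, T x ⊆ S x) → ∀ x, S x = T x

theorem enlargement_closed {H : Type*} [NormedAddCommGroup H] [InnerProductSpace ℝ H]
    [CompleteSpace H] (T : H → Set H) (hT : MaxMonotoneOp T)
    (y v : ℕ → H) (ε : ℕ → ℝ) (y₀ v₀ : H) (ε₀ : ℝ)
    (hmem : ∀ k, v k ∈ enl T (ε k) (y k))
    (hweak : ∀ w : H, Tendsto (fun k => ⟪y k, w⟫_ℝ) atTop (nhds ⟪y₀, w⟫_ℝ))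
    (hstrong : Tendsto v atTop (nhds v₀))
    (heps : Tendsto ε atTop (nhds ε₀)) :
    v₀ ∈ enl T ε₀ y₀ := by
  intro z w hw
  -- boundedness of (y k) via Banach-Steinhaus
  obtain ⟨C, hC⟩ : ∃ C, ∀ k, ‖innerSL ℝ (y k)‖ ≤ C := by
    apply banach_steinhaus
    intro x
    have := (hweak x).norm.bddAbove_range
    obtain ⟨C, hC⟩ := this
    exact ⟨C, fun k => hC ⟨k, rfl⟩⟩
  have hCy : ∀ k, ‖y k‖ ≤ C := by
    intro k; simpa using hC k
  -- second piece tends to 0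
  have h2 : Tendsto (fun k => ⟪y k - z, v k - v₀⟫_ℝ) atTop (nhds 0) := by
    have hnorm : Tendsto (fun k => ‖v k - v₀‖) atTop (nhds 0) :=
      (tendsto_iff_norm_sub_tendsto_zero.mp hstrong)
    refine squeeze_zero_norm (a := fun k => (C + ‖z‖) * ‖v k - v₀‖) ?_ ?_
    · intro k
      calc ‖⟪y k - z, v k - v₀⟫_ℝ‖ ≤ ‖y k - z‖ * ‖v k - v₀‖ := norm_inner_le_norm _ _
        _ ≤ (C + ‖z‖) * ‖v k - v₀‖ := by
            apply mul_le_mul_of_nonneg_right _ (norm_nonneg _)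
            calc ‖y k - z‖ ≤ ‖y k‖ + ‖z‖ := norm_sub_le _ _
              _ ≤ C + ‖z‖ := by linarith [hCy k]
    · simpa using hnorm.const_mul (C + ‖z‖)
  -- first piece via weak convergence
  have h1 : Tendsto (fun k => ⟪y k - z, v₀ - w⟫_ℝ) atTop
      (nhds ⟪y₀ - z, v₀ - w⟫_ℝ) := by
    have := (hweak (v₀ - w)).sub_const ⟪z, v₀ - w⟫_ℝ
    simpa [inner_sub_left] using this
  have hsum : Tendsto (fun k => ⟪y k - z, v k - w⟫_ℝ) atTop
      (nhds ⟪y₀ - z, v₀ - w⟫_ℝ) := by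
    have := h1.add h2
    simp only [add_zero] at this
    convert this using 2 with k
    rw [← inner_add_right]
    congr 1
    abel
  refine le_of_tendsto_of_tendsto' heps.neg hsum ?_
  intro k
  exact hmem k z w hw
end

section
/- If F : D ⊆ H → H is L⁻¹-cocoercive on its domain D, then for every z, z' ∈ D one has F(z) ∈ F^[ε](z') with ε = L‖z' - z‖²/4, where F is identified with its set-valued representation x ↦ {F(x)}. -/
open Filter InnerProductSpace

theorem cocoercive_mem_enlargement {H : Type*} [NormedAddCommGroup H]
    [InnerProductSpace ℝ H] [CompleteSpace H] (D : Set H) (F : H → H) (L : ℝ)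
    (hL : 0 < L)
    (hcoco : ∀ x ∈ D, ∀ y ∈ D, (1 / L) * ‖F x - F y‖ ^ 2 ≤ ⟪F x - F y, x - y⟫_ℝ)
    (z z' : H) (hz : z ∈ D) (hz' : z' ∈ D) :
    ∀ y ∈ D, -(L * ‖z' - z‖ ^ 2 / 4) ≤ ⟪z' - y, F z - F y⟫_ℝ := by
  intro y hy
  have h1 := hcoco z hz y hy
  have h2 : ⟪z' - y, F z - F y⟫_ℝ = ⟪F z - F y, z - y⟫_ℝ + ⟪z' - z, F z - F y⟫_ℝ := by
    have hzy : z' - y = (z - y) + (z' - z) := by abel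
    rw [hzy, inner_add_left, real_inner_comm (z - y)]
  have h3 : -(‖z' - z‖ * ‖F z - F y‖) ≤ ⟪z' - z, F z - F y⟫_ℝ :=
    neg_le_of_abs_le (abs_real_inner_le_norm _ _)
  have hn : (0:ℝ) ≤ ‖F z - F y‖ := norm_nonneg _
  have hn2 : (0:ℝ) ≤ ‖z' - z‖ := norm_nonneg _
  rw [h2]
  have h1' : ‖F z - F y‖ ^ 2 ≤ L * ⟪F z - F y, z - y⟫_ℝ := by
    rw [one_div_mul_eq_div, div_le_iff₀' hL] at h1
    exact h1
  nlinarith [sq_nonneg (2 * ‖F z - F y‖ - L * ‖z' - z‖), mul_pos hL hL,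
    mul_le_mul_of_nonneg_left h3 hL.le]
end

section
/- Let a, b ∈ H be vectors in a real Hilbert space, let λ > 0, ε ≥ 0, σ ∈ [0,1), and let e = a - λ b. If ‖e‖² + 2λε ≤ σ²(‖a‖² + ‖λ b‖²), then ⟨a, λ b⟩ - λε ≥ ((1-σ²)/2)(‖a‖² + ‖λ b‖²); equivalently, ⟨a, b⟩ - ε ≥ ((1-σ²)/(2λ))(‖a‖² + λ²‖b‖²). -/
open Filter InnerProductSpace

theorem relative_error_key_inequality {H : Type*} [NormedAddCommGroup H]
    [InnerProductSpace ℝ H] (a b e : H) (lam ε σ : ℝ)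
    (hlam : 0 < lam) (hε : 0 ≤ ε) (hσ0 : 0 ≤ σ) (hσ1 : σ < 1)
    (he : e = a - lam • b)
    (herr : ‖e‖ ^ 2 + 2 * lam * ε ≤ σ ^ 2 * (‖a‖ ^ 2 + ‖lam • b‖ ^ 2)) :
    (1 - σ ^ 2) / 2 * (‖a‖ ^ 2 + ‖lam • b‖ ^ 2) ≤ ⟪a, lam • b⟫_ℝ - lam * ε := by
  have h : ‖a - lam • b‖ ^ 2 = ‖a‖ ^ 2 - 2 * ⟪a, lam • b⟫_ℝ + ‖lam • b‖ ^ 2 := by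
    rw [@norm_sub_sq_real]
  rw [he, h] at herr
  linarith
end

section
/- Let T : H →ᵐ H be maximal monotone on a real Hilbert space H, V a closed linear subspace of H, and (x^k, u^k, ε^k) a sequence with u^k ∈ T^[ε^k](x^k), (x^k, u^k) converging weakly to (x̄, ū), and ε^k → 0. If P_{V^⊥} x^k → 0 strongly and P_V u^k → 0 strongly, then ū ∈ T(x̄), x̄ ∈ V, ū ∈ V^⊥, and ⟨x^k, u^k⟩ → ⟨x̄, ū⟩ = 0. -/
open Filter InnerProductSpace

/-! Passing to the limit in `-ε k ≤ ⟪x k - y, u k - v⟫` gives `0 ≤ ⟪xbar - y, ubar - v⟫` on the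
whole graph of `T`, hence `ubar ∈ T xbar` by maximality, provided `⟪x k, u k⟫ → ⟪xbar, ubar⟫`.
That is where the subspace enters: `⟪x, u⟫ = ⟪x, P_K u⟫ + ⟪u, P_Kᗮ x⟫`, and each term pairs a
weakly convergent, hence bounded (Banach–Steinhaus), sequence with a strongly null one. The same
projections force `xbar ∈ K` and `ubar ∈ Kᗮ`, so the limit pairing vanishes. -/

open Topology

section

variable {H : Type*} [NormedAddCommGroup H] [InnerProductSpace ℝ H]

theorem MaxMonotoneOp.mem_of_forall_inner_nonneg {T : H → Set H} (hT : MaxMonotoneOp T)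
    {x u : H} (h : ∀ y v, v ∈ T y → 0 ≤ ⟪x - y, u - v⟫_ℝ) : u ∈ T x := by
  let S : H → Set H := fun z => T z ∪ {w | z = x ∧ w = u}
  have hS : MonotoneOp S := by
    rintro a b p q (hp | ⟨rfl, rfl⟩) (hq | ⟨rfl, rfl⟩)
    · exact hT.1 a b p q hp hq
    · rw [← inner_neg_neg, neg_sub, neg_sub]
      exact h a p hp
    · exact h b q hq
    · simp
  rw [← hT.2 S hS (fun _ => Set.subset_union_left) x]
  exact Or.inr ⟨rfl, rfl⟩

theorem tendsto_inner_sub_sub {ι : Type*} {l : Filter ι} {x u : ι → H} {xbar ubar : H}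
    (hx : ∀ w, Tendsto (fun k => ⟪x k, w⟫_ℝ) l (𝓝 ⟪xbar, w⟫_ℝ))
    (hu : ∀ w, Tendsto (fun k => ⟪u k, w⟫_ℝ) l (𝓝 ⟪ubar, w⟫_ℝ))
    (hxu : Tendsto (fun k => ⟪x k, u k⟫_ℝ) l (𝓝 ⟪xbar, ubar⟫_ℝ)) (y v : H) :
    Tendsto (fun k => ⟪x k - y, u k - v⟫_ℝ) l (𝓝 ⟪xbar - y, ubar - v⟫_ℝ) := by
  have expand : ∀ a b : H, ⟪a - y, b - v⟫_ℝ = ⟪a, b⟫_ℝ - ⟪a, v⟫_ℝ - ⟪b, y⟫_ℝ + ⟪y, v⟫_ℝ := by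
    intro a b
    rw [inner_sub_left, inner_sub_right, inner_sub_right, real_inner_comm b y]
    ring
  simp only [expand]
  exact ((hxu.sub (hx v)).sub (hu y)).add tendsto_const_nhds

theorem MaxMonotoneOp.mem_of_tendsto_enl {T : H → Set H} (hT : MaxMonotoneOp T)
    {ι : Type*} {l : Filter ι} [l.NeBot] {x u : ι → H} {ε : ι → ℝ} {xbar ubar : H}
    (hmem : ∀ k, u k ∈ enl T (ε k) (x k))
    (hx : ∀ w, Tendsto (fun k => ⟪x k, w⟫_ℝ) l (𝓝 ⟪xbar, w⟫_ℝ))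
    (hu : ∀ w, Tendsto (fun k => ⟪u k, w⟫_ℝ) l (𝓝 ⟪ubar, w⟫_ℝ))
    (hε : Tendsto ε l (𝓝 0))
    (hxu : Tendsto (fun k => ⟪x k, u k⟫_ℝ) l (𝓝 ⟪xbar, ubar⟫_ℝ)) : ubar ∈ T xbar :=
  hT.mem_of_forall_inner_nonneg fun y v hv =>
    le_of_tendsto_of_tendsto' (by simpa using hε.neg) (tendsto_inner_sub_sub hx hu hxu y v)
      fun k => hmem k y v hv

theorem isBoundedUnder_norm_of_tendsto_inner [CompleteSpace H] {x : ℕ → H} {xbar : H}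
    (hx : ∀ w, Tendsto (fun k => ⟪x k, w⟫_ℝ) atTop (𝓝 ⟪xbar, w⟫_ℝ)) :
    IsBoundedUnder (· ≤ ·) atTop (norm ∘ x) := by
  have pointwise : ∀ w, ∃ C, ∀ k, ‖innerSL ℝ (x k) w‖ ≤ C := fun w =>
    let ⟨C, hC⟩ := (hx w).norm.bddAbove_range
    ⟨C, fun k => hC ⟨k, rfl⟩⟩
  obtain ⟨C, hC⟩ := banach_steinhaus pointwise
  exact isBoundedUnder_of ⟨C, fun k => by simpa [innerSL_apply_norm] using hC k⟩

theorem tendsto_inner_zero_of_isBoundedUnder {ι : Type*} {l : Filter ι} {a b : ι → H}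
    (ha : IsBoundedUnder (· ≤ ·) l (norm ∘ a)) (hb : Tendsto b l (𝓝 0)) :
    Tendsto (fun k => ⟪a k, b k⟫_ℝ) l (𝓝 0) :=
  hb.op_zero_isBoundedUnder_le ha (fun q p => ⟪p, q⟫_ℝ) fun q p =>
    (norm_inner_le_norm p q).trans_eq (mul_comm _ _)

namespace Submodule

theorem inner_eq_inner_starProjection_add_inner_starProjection_orthogonal (K : Submodule ℝ H)
    [K.HasOrthogonalProjection] (x u : H) :
    ⟪x, u⟫_ℝ = ⟪x, K.starProjection u⟫_ℝ + ⟪u, Kᗮ.starProjection x⟫_ℝ := by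
  rw [real_inner_comm (Kᗮ.starProjection x) u, inner_starProjection_left_eq_right,
    ← inner_add_right, starProjection_add_starProjection_orthogonal]

theorem mem_orthogonal_of_tendsto_starProjection (K : Submodule ℝ H) [K.HasOrthogonalProjection]
    {ι : Type*} {l : Filter ι} [l.NeBot] {x : ι → H} {xbar : H}
    (hx : ∀ w, Tendsto (fun k => ⟪x k, w⟫_ℝ) l (𝓝 ⟪xbar, w⟫_ℝ))
    (hP : Tendsto (fun k => K.starProjection (x k)) l (𝓝 0)) : xbar ∈ Kᗮ := by
  refine (K.mem_orthogonal' xbar).2 fun w hw => ?_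
  have hPw : Tendsto (fun k => ⟪x k, w⟫_ℝ) l (𝓝 0) := by
    simpa [inner_starProjection_left_eq_right, starProjection_eq_self_iff.2 hw] using
      hP.inner (𝕜 := ℝ) (tendsto_const_nhds (x := w))
  exact tendsto_nhds_unique (hx w) hPw

end Submodule

end

theorem weak_strong_graph_limit_general {H : Type*} [NormedAddCommGroup H]
    [InnerProductSpace ℝ H] [CompleteSpace H]
    (T : H → Set H) (hT : MaxMonotoneOp T)
    (K : Submodule ℝ H)
    [Submodule.HasOrthogonalProjection K]
    (x u : ℕ → H) (ε : ℕ → ℝ) (xbar ubar : H)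
    (hmem : ∀ k, u k ∈ enl T (ε k) (x k))
    (hxweak : ∀ w : H, Tendsto (fun k => ⟪x k, w⟫_ℝ) atTop (nhds ⟪xbar, w⟫_ℝ))
    (huweak : ∀ w : H, Tendsto (fun k => ⟪u k, w⟫_ℝ) atTop (nhds ⟪ubar, w⟫_ℝ))
    (heps : Tendsto ε atTop (nhds 0))
    (hxproj : Tendsto (fun k => ((Submodule.orthogonalProjectionOnto Kᗮ (x k) : H))) atTop (nhds 0))
    (huproj : Tendsto (fun k => ((Submodule.orthogonalProjectionOnto K (u k) : H))) atTop (nhds 0)) :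
    ubar ∈ T xbar ∧ xbar ∈ K ∧ ubar ∈ Kᗮ ∧
      Tendsto (fun k => ⟪x k, u k⟫_ℝ) atTop (nhds ⟪xbar, ubar⟫_ℝ) ∧
      ⟪xbar, ubar⟫_ℝ = 0 := by
  have hxK : xbar ∈ K :=
    K.orthogonal_orthogonal ▸ Kᗮ.mem_orthogonal_of_tendsto_starProjection hxweak hxproj
  have huK : ubar ∈ Kᗮ := K.mem_orthogonal_of_tendsto_starProjection huweak huproj
  have hperp : ⟪xbar, ubar⟫_ℝ = 0 := K.inner_right_of_mem_orthogonal hxK huK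
  have hxu : Tendsto (fun k => ⟪x k, u k⟫_ℝ) atTop (𝓝 ⟪xbar, ubar⟫_ℝ) := by
    have hP := tendsto_inner_zero_of_isBoundedUnder (isBoundedUnder_norm_of_tendsto_inner hxweak)
      (b := fun k => K.starProjection (u k)) huproj
    have hQ := tendsto_inner_zero_of_isBoundedUnder (isBoundedUnder_norm_of_tendsto_inner huweak)
      (b := fun k => Kᗮ.starProjection (x k)) hxproj
    rw [hperp]
    simpa only [← K.inner_eq_inner_starProjection_add_inner_starProjection_orthogonal, add_zero]
      using hP.add hQ
  exact ⟨hT.mem_of_tendsto_enl hmem hxweak huweak heps hxu, hxK, huK, hxu, hperp⟩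

theorem weak_strong_graph_limit {H : Type*} [NormedAddCommGroup H]
    [InnerProductSpace ℝ H] [CompleteSpace H]
    (T : H → Set H) (hT : MaxMonotoneOp T)
    (K : Submodule ℝ H) (hK : IsClosed (K : Set H))
    [Submodule.HasOrthogonalProjection K] [Submodule.HasOrthogonalProjection Kᗮ]
    (x u : ℕ → H) (ε : ℕ → ℝ) (xbar ubar : H)
    (hmem : ∀ k, u k ∈ enl T (ε k) (x k))
    (hxweak : ∀ w : H, Tendsto (fun k => ⟪x k, w⟫_ℝ) atTop (nhds ⟪xbar, w⟫_ℝ))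
    (huweak : ∀ w : H, Tendsto (fun k => ⟪u k, w⟫_ℝ) atTop (nhds ⟪ubar, w⟫_ℝ))
    (heps : Tendsto ε atTop (nhds 0))
    (hxproj : Tendsto (fun k => ((Submodule.orthogonalProjectionOnto Kᗮ (x k) : H))) atTop (nhds 0))
    (huproj : Tendsto (fun k => ((Submodule.orthogonalProjectionOnto K (u k) : H))) atTop (nhds 0)) :
    ubar ∈ T xbar ∧ xbar ∈ K ∧ ubar ∈ Kᗮ ∧
      Tendsto (fun k => ⟪x k, u k⟫_ℝ) atTop (nhds ⟪xbar, ubar⟫_ℝ) ∧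
      ⟪xbar, ubar⟫_ℝ = 0 :=
  weak_strong_graph_limit_general T hT K x u ε xbar ubar hmem hxweak huweak heps hxproj huproj
end

section
/- Let A : H →ᵐ H and B : G →ᵐ G be maximal monotone operators on real Hilbert spaces and G₀ : H → G a bounded linear operator. Suppose (r^k, a^k) ∈ Graph A^[ε_a^k] and (s^k, b^k) ∈ Graph B^[ε_b^k] with r^k ⇀ r̄ weakly in H, b^k ⇀ b̄ weakly in G, ε_a^k → 0, ε_b^k → 0, G₀ r^k - s^k → 0 strongly, and a^k + G₀* b^k → 0 strongly. Then -G₀* b̄ ∈ A(r̄) and b̄ ∈ B(G₀ r̄). -/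
open Filter InnerProductSpace

/-!
Put `u := -G₀* b̄`. Passing to the limit in the enlargement inequalities of `A` and `B` shows
that `((r̄, G₀ r̄), (u, b̄))` is monotonically related to the graph of `A × B`: writing
`a^k = -G₀* b^k + o(1)` and `s^k = G₀ r^k + o(1)`, the sum of the two inequalities becomes,
up to terms tending to zero, an expression in which the product `⟪G₀ r^k, b^k⟫` cancels. What
remains is affine in `r^k` and in `b^k` separately, so it passes to weak limits. Maximality of
`A × B` then puts `(u, b̄)` in `(A × B)(r̄, G₀ r̄)`.
-/

namespace MaxMonotoneOp

variable {H G : Type*} [NormedAddCommGroup H] [InnerProductSpace ℝ H]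
  [NormedAddCommGroup G] [InnerProductSpace ℝ G]

theorem mem_of_forall_inner_nonneg_s16 {T : H → Set H} (hT : MaxMonotoneOp T) {x u : H}
    (h : ∀ y v, v ∈ T y → 0 ≤ ⟪x - y, u - v⟫_ℝ) : u ∈ T x := by
  let S : H → Set H := fun y => T y ∪ {z | y = x ∧ z = u}
  have hS : MonotoneOp S := by
    rintro x₁ x₂ u₁ u₂ (hu₁ | ⟨rfl, rfl⟩) (hu₂ | ⟨rfl, rfl⟩)
    · exact hT.1 x₁ x₂ u₁ u₂ hu₁ hu₂
    · rw [← neg_sub x₂ x₁, ← neg_sub u₂ u₁, inner_neg_neg]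
      exact h x₁ u₁ hu₁
    · exact h x₂ u₂ hu₂
    · simp
  rw [← hT.2 S hS (fun _ => Set.subset_union_left) x]
  exact Or.inr ⟨rfl, rfl⟩

/-- Maximality of the product operator `T × S`. -/
theorem mem_and_mem_of_forall_add_inner_nonneg {T : H → Set H} {S : G → Set G}
    (hT : MaxMonotoneOp T) (hS : MaxMonotoneOp S) {x u : H} {x' u' : G}
    (h : ∀ y v, v ∈ T y → ∀ z w, w ∈ S z → 0 ≤ ⟪x - y, u - v⟫_ℝ + ⟪x' - z, u' - w⟫_ℝ) :
    u ∈ T x ∧ u' ∈ S x' := by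
  have hu' : u' ∈ S x' := by
    refine hS.mem_of_forall_inner_nonneg_s16 fun z w hw => ?_
    by_contra! hneg
    -- the pair `(z, w)` would force `u ∈ T x`, and then `(x, u)` itself contradicts `hneg`
    have hu : u ∈ T x :=
      hT.mem_of_forall_inner_nonneg_s16 fun y v hv => by linarith [h y v hv z w hw]
    have := h x u hu z w hw
    simp only [sub_self, inner_zero_left] at this
    linarith
  refine ⟨hT.mem_of_forall_inner_nonneg_s16 fun y v hv => ?_, hu'⟩
  simpa using h y v hv x' u' hu'

end MaxMonotoneOp

section WeakConvergence

variable {H : Type*} [NormedAddCommGroup H] [InnerProductSpace ℝ H]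

theorem exists_norm_le_of_tendsto_inner [CompleteSpace H] {f : ℕ → H} {f₀ : H}
    (hf : ∀ w : H, Tendsto (fun k => ⟪f k, w⟫_ℝ) atTop (nhds ⟪f₀, w⟫_ℝ)) :
    ∃ C, ∀ k, ‖f k‖ ≤ C := by
  have hpt : ∀ w : H, ∃ C, ∀ k, ‖innerSL ℝ (f k) w‖ ≤ C := fun w =>
    let ⟨C, hC⟩ := (hf w).norm.bddAbove_range
    ⟨C, fun k => hC ⟨k, rfl⟩⟩
  obtain ⟨C, hC⟩ := banach_steinhaus hpt
  exact ⟨C, fun k => by simpa [innerSL_apply_norm] using hC k⟩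

theorem tendsto_inner_sub_zero_of_tendsto_inner [CompleteSpace H] {f g : ℕ → H} {f₀ : H}
    (hf : ∀ w : H, Tendsto (fun k => ⟪f k, w⟫_ℝ) atTop (nhds ⟪f₀, w⟫_ℝ))
    (hg : Tendsto g atTop (nhds 0)) (y : H) :
    Tendsto (fun k => ⟪f k - y, g k⟫_ℝ) atTop (nhds 0) := by
  obtain ⟨C, hC⟩ := exists_norm_le_of_tendsto_inner hf
  have hle : ∀ k, ‖⟪f k - y, g k⟫_ℝ‖ ≤ (C + ‖y‖) * ‖g k‖ := fun k =>
    calc ‖⟪f k - y, g k⟫_ℝ‖ ≤ ‖f k - y‖ * ‖g k‖ := norm_inner_le_norm _ _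
      _ ≤ (C + ‖y‖) * ‖g k‖ := by gcongr; exact (norm_sub_le _ _).trans (by linarith [hC k])
  exact squeeze_zero_norm hle (by simpa using hg.norm.const_mul (C + ‖y‖))

end WeakConvergence

section Limit

variable {H G : Type*} [NormedAddCommGroup H] [InnerProductSpace ℝ H]
  [NormedAddCommGroup G] [InnerProductSpace ℝ G] [CompleteSpace H] [CompleteSpace G]

theorem inner_neg_adjoint_add_inner_eq (G₀ : H →L[ℝ] G) (x y v : H) (b z w : G) :
    ⟪x - y, -(ContinuousLinearMap.adjoint G₀) b - v⟫_ℝ + ⟪G₀ x - z, b - w⟫_ℝ =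
      ⟪y, v⟫_ℝ + ⟪z, w⟫_ℝ - ⟪x, v + (ContinuousLinearMap.adjoint G₀) w⟫_ℝ
        + ⟪b, G₀ y - z⟫_ℝ := by
  simp only [inner_sub_left, inner_sub_right, inner_add_right, inner_neg_right,
    ContinuousLinearMap.adjoint_inner_right, map_sub]
  rw [real_inner_comm b (G₀ y), real_inner_comm b z]
  ring

theorem add_inner_nonneg_of_enl_limit (A : H → Set H) (B : G → Set G) (G₀ : H →L[ℝ] G)
    {r a : ℕ → H} {s b : ℕ → G} {εa εb : ℕ → ℝ} {rbar : H} {bbar : G}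
    (hmemA : ∀ k, a k ∈ enl A (εa k) (r k))
    (hmemB : ∀ k, b k ∈ enl B (εb k) (s k))
    (hrweak : ∀ w : H, Tendsto (fun k => ⟪r k, w⟫_ℝ) atTop (nhds ⟪rbar, w⟫_ℝ))
    (hbweak : ∀ w : G, Tendsto (fun k => ⟪b k, w⟫_ℝ) atTop (nhds ⟪bbar, w⟫_ℝ))
    (hεa : Tendsto εa atTop (nhds 0)) (hεb : Tendsto εb atTop (nhds 0))
    (hGs : Tendsto (fun k => G₀ (r k) - s k) atTop (nhds 0))
    (haG : Tendsto (fun k => a k + (ContinuousLinearMap.adjoint G₀) (b k)) atTop (nhds 0))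
    {y v : H} (hv : v ∈ A y) {z w : G} (hw : w ∈ B z) :
    0 ≤ ⟪rbar - y, -(ContinuousLinearMap.adjoint G₀) bbar - v⟫_ℝ
      + ⟪G₀ rbar - z, bbar - w⟫_ℝ := by
  set Φ : H → G → ℝ := fun x c =>
    ⟪x - y, -(ContinuousLinearMap.adjoint G₀) c - v⟫_ℝ + ⟪G₀ x - z, c - w⟫_ℝ with hΦ
  have hsplit : ∀ k, ⟪r k - y, a k - v⟫_ℝ + ⟪s k - z, b k - w⟫_ℝ = Φ (r k) (b k)
      + ⟪r k - y, a k + (ContinuousLinearMap.adjoint G₀) (b k)⟫_ℝ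
      - ⟪b k - w, G₀ (r k) - s k⟫_ℝ := fun k => by
    simp only [hΦ, inner_sub_left, inner_sub_right, inner_add_right, inner_neg_right]
    rw [real_inner_comm (b k) (G₀ (r k)), real_inner_comm (b k) (s k),
      real_inner_comm w (G₀ (r k)), real_inner_comm w (s k)]
    ring
  have hΦlim : Tendsto (fun k => Φ (r k) (b k)) atTop (nhds (Φ rbar bbar)) := by
    simp only [hΦ, inner_neg_adjoint_add_inner_eq]
    exact ((tendsto_const_nhds.sub (hrweak _)).add (hbweak _))
  have hlim : Tendsto (fun k => ⟪r k - y, a k - v⟫_ℝ + ⟪s k - z, b k - w⟫_ℝ) atTop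
      (nhds (Φ rbar bbar)) := by
    simp only [hsplit]
    simpa using (hΦlim.add (tendsto_inner_sub_zero_of_tendsto_inner hrweak haG y)).sub
      (tendsto_inner_sub_zero_of_tendsto_inner hbweak hGs w)
  have hε : Tendsto (fun k => -εa k + -εb k) atTop (nhds 0) := by
    simpa using hεa.neg.add hεb.neg
  exact le_of_tendsto_of_tendsto' hε hlim fun k => add_le_add (hmemA k y v hv) (hmemB k z w hw)

end Limit

theorem composed_graph_limit {H G : Type*} [NormedAddCommGroup H] [InnerProductSpace ℝ H]
    [NormedAddCommGroup G] [InnerProductSpace ℝ G] [CompleteSpace H] [CompleteSpace G]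
    (A : H → Set H) (B : G → Set G) (hA : MaxMonotoneOp A) (hB : MaxMonotoneOp B)
    (G₀ : H →L[ℝ] G)
    (r a : ℕ → H) (s b : ℕ → G) (εa εb : ℕ → ℝ) (rbar : H) (bbar : G)
    (hmemA : ∀ k, a k ∈ enl A (εa k) (r k))
    (hmemB : ∀ k, b k ∈ enl B (εb k) (s k))
    (hrweak : ∀ w : H, Tendsto (fun k => ⟪r k, w⟫_ℝ) atTop (nhds ⟪rbar, w⟫_ℝ))
    (hbweak : ∀ w : G, Tendsto (fun k => ⟪b k, w⟫_ℝ) atTop (nhds ⟪bbar, w⟫_ℝ))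
    (hεa : Tendsto εa atTop (nhds 0)) (hεb : Tendsto εb atTop (nhds 0))
    (hGs : Tendsto (fun k => G₀ (r k) - s k) atTop (nhds 0))
    (haG : Tendsto (fun k => a k + (ContinuousLinearMap.adjoint G₀) (b k)) atTop (nhds 0)) :
    -(ContinuousLinearMap.adjoint G₀) bbar ∈ A rbar ∧ bbar ∈ B (G₀ rbar) :=
  hA.mem_and_mem_of_forall_add_inner_nonneg hB fun _ _ hv _ _ hw =>
    add_inner_nonneg_of_enl_limit A B G₀ hmemA hmemB hrweak hbweak hεa hεb hGs haG hv hw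
end

section
/- Let F : D ⊆ H → H be L-Lipschitz continuous on D, B : H →ᵐ H maximal monotone with Dom B ⊆ C ⊆ D for nonempty closed convex C, and let σ ∈ (0,1), λ = σ/L. Given z̃, w̃ ∈ H, set z̄ = P_C(z̃), x = (λB + I)⁻¹(z̃ + λw̃ - λF(z̄)), and y = (z̃ + λw̃ - x)/λ + F(x) - F(z̄). Then y ∈ (F + B)(x) and ‖λy + x - (z̃ + λw̃)‖ ≤ σ‖z̃ - x‖. -/
open Filter InnerProductSpace Pointwise

/-! Unwinding the resolvent equation gives `y = F x + b` with `b ∈ B x`, and the residual is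
`λ (F x - F z̄)`, of norm at most `σ ‖x - z̄‖` by the Lipschitz bound. Since `x ∈ Dom B ⊆ C` and
`z̄` is the projection of `z̃` onto `C`, the obtuse-angle inequality `⟪z̃ - z̄, x - z̄⟫ ≤ 0`
gives `‖x - z̄‖ ≤ ‖z̃ - x‖`. -/

section Projection

variable {H : Type*} [NormedAddCommGroup H] [InnerProductSpace ℝ H] {C : Set H} {z p : H}

theorem real_inner_sub_le_zero_of_isMinOn_norm_sub (hC : Convex ℝ C) (hp : p ∈ C)
    (hmin : IsMinOn (fun c => ‖z - c‖) C p) {c : H} (hc : c ∈ C) :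
    ⟪z - p, c - p⟫_ℝ ≤ 0 :=
  (norm_eq_iInf_iff_real_inner_le_zero hC hp).1 (hmin.iInf_eq hp).symm c hc

theorem norm_sub_le_norm_sub_of_isMinOn_norm_sub (hC : Convex ℝ C) (hp : p ∈ C)
    (hmin : IsMinOn (fun c => ‖z - c‖) C p) {c : H} (hc : c ∈ C) :
    ‖c - p‖ ≤ ‖z - c‖ := by
  have hangle := real_inner_sub_le_zero_of_isMinOn_norm_sub hC hp hmin hc
  have hexpand : ‖z - c‖ ^ 2 = ‖z - p‖ ^ 2 - 2 * ⟪z - p, c - p⟫_ℝ + ‖c - p‖ ^ 2 := by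
    rw [← norm_sub_sq_real, sub_sub_sub_cancel_right]
  exact pow_le_pow_iff_left₀ (norm_nonneg _) (norm_nonneg _) two_ne_zero |>.1 <| by
    nlinarith [sq_nonneg ‖z - p‖]

end Projection

section ForwardBackward

variable {𝕜 E : Type*} [Field 𝕜] [AddCommGroup E] [Module 𝕜 E] {lam : 𝕜} {v x a q y : E}

theorem eq_add_of_add_smul_eq_sub_smul (hlam : lam ≠ 0) {b : E}
    (hres : x + lam • b = v - lam • q) (hy : y = lam⁻¹ • (v - x) + a - q) :
    y = a + b := by
  have hv : v - x = lam • (b + q) := by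
    rw [smul_add, ← sub_eq_iff_eq_add.2 hres.symm]; abel
  rw [hy, hv, inv_smul_smul₀ hlam]; abel

theorem smul_add_sub_eq_smul_sub (hlam : lam ≠ 0) (hy : y = lam⁻¹ • (v - x) + a - q) :
    lam • y + x - v = lam • (a - q) := by
  rw [hy, smul_sub, smul_add, smul_inv_smul₀ hlam, smul_sub]; abel

end ForwardBackward

theorem tseng_step_relative_error_general {H : Type*} [NormedAddCommGroup H]
    [InnerProductSpace ℝ H]
    (D : Set H) (F : H → H) (L : ℝ) (hL : 0 < L)
    (hFlip : ∀ x ∈ D, ∀ y ∈ D, ‖F x - F y‖ ≤ L * ‖x - y‖)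
    (B : H → Set H)
    (C : Set H) (hCconv : Convex ℝ C)
    (hDomBC : {x : H | (B x).Nonempty} ⊆ C) (hCD : C ⊆ D)
    (σ : ℝ) (hσ0 : 0 < σ) (lam : ℝ) (hlam : lam = σ / L)
    (ztilde wtilde : H)
    (zbar : H) (hzbar : zbar ∈ C ∧ ∀ c ∈ C, ‖ztilde - zbar‖ ≤ ‖ztilde - c‖)
    (x bx : H) (hbx : bx ∈ B x)
    (hres : x + lam • bx = ztilde + lam • wtilde - lam • F zbar)
    (y : H) (hy : y = lam⁻¹ • (ztilde + lam • wtilde - x) + F x - F zbar) :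
    y ∈ ({F x} : Set H) + B x ∧
      ‖lam • y + x - (ztilde + lam • wtilde)‖ ≤ σ * ‖ztilde - x‖ := by
  have hlam_pos : 0 < lam := hlam ▸ div_pos hσ0 hL
  have hxC : x ∈ C := hDomBC ⟨bx, hbx⟩
  refine ⟨eq_add_of_add_smul_eq_sub_smul hlam_pos.ne' hres hy ▸ Set.add_mem_add rfl hbx, ?_⟩
  have hproj : ‖x - zbar‖ ≤ ‖ztilde - x‖ :=
    norm_sub_le_norm_sub_of_isMinOn_norm_sub hCconv hzbar.1 (isMinOn_iff.2 hzbar.2) hxC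
  have hlip : ‖F x - F zbar‖ ≤ L * ‖x - zbar‖ := hFlip x (hCD hxC) zbar (hCD hzbar.1)
  rw [smul_add_sub_eq_smul_sub hlam_pos.ne' hy, norm_smul,
    Real.norm_of_nonneg hlam_pos.le]
  calc lam * ‖F x - F zbar‖ ≤ lam * (L * ‖x - zbar‖) := by gcongr
    _ = σ * ‖x - zbar‖ := by rw [hlam, ← mul_assoc, div_mul_cancel₀ σ hL.ne']
    _ ≤ σ * ‖ztilde - x‖ := by gcongr

theorem tseng_step_relative_error {H : Type*} [NormedAddCommGroup H]
    [InnerProductSpace ℝ H] [CompleteSpace H]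
    (D : Set H) (F : H → H) (L : ℝ) (hL : 0 < L)
    (hFlip : ∀ x ∈ D, ∀ y ∈ D, ‖F x - F y‖ ≤ L * ‖x - y‖)
    (B : H → Set H) (hB : MaxMonotoneOp B)
    (C : Set H) (hCne : C.Nonempty) (hCclosed : IsClosed C) (hCconv : Convex ℝ C)
    (hDomBC : {x : H | (B x).Nonempty} ⊆ C) (hCD : C ⊆ D)
    (σ : ℝ) (hσ0 : 0 < σ) (hσ1 : σ < 1) (lam : ℝ) (hlam : lam = σ / L)
    (ztilde wtilde : H)
    (zbar : H) (hzbar : zbar ∈ C ∧ ∀ c ∈ C, ‖ztilde - zbar‖ ≤ ‖ztilde - c‖)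
    (x bx : H) (hbx : bx ∈ B x)
    (hres : x + lam • bx = ztilde + lam • wtilde - lam • F zbar)
    (y : H) (hy : y = lam⁻¹ • (ztilde + lam • wtilde - x) + F x - F zbar) :
    y ∈ ({F x} : Set H) + B x ∧
      ‖lam • y + x - (ztilde + lam • wtilde)‖ ≤ σ * ‖ztilde - x‖ :=
  tseng_step_relative_error_general D F L hL hFlip B C hCconv hDomBC hCD σ hσ0 lam hlam ztilde
    wtilde zbar hzbar x bx hbx hres y hy
end
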